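/- arXiv:1712.03657 — 2 statements merged into one kernel-verified Lean document; each statement's English description precedes it below -/
import Mathlib

section
/- Let p = 1 and 1 ≤ q < N/(N−1) (1 ≤ q < ∞ if N = 1), and assume W_i(ξ) ≥ α|ξ| for some α > 0 and all ξ ∈ ℝ^{d×N}, i = 1,2. Then: (a) if 𝓕₁(χ,u;Ω) < +∞, the infimum defining 𝓕₁(χ,u;Ω) is attained by sequences u_n ∈ W^{1,q}(Ω;ℝ^d), χ_n ∈ BV(Ω;{0,1}) with u_n ⇀* u weakly-* in BV(Ω;ℝ^d) and χ_n ⇀* χ weakly-* in BV(Ω;{0,1}); and (b) if u_n ⇀* u weakly-* in BV(Ω;ℝ^d), χ_n ⇀* χ weakly-* in BV(Ω;{0,1}) and 𝓕₁(χ_n,u_n;Ω) < +∞ for every n, then 𝓕₁(χ,u;Ω) ≤ liminf_{n→∞} 𝓕₁(χ_n,u_n;Ω). -/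
open MeasureTheory Filter Topology Set
open scoped ENNReal Classical

noncomputable section

namespace ODRelax

/-- The ambient euclidean domain `ℝ^N`. -/
abbrev Dom (N : ℕ) := Fin N → ℝ

/-- The space of `d × N` matrices (gradients of maps `ℝ^N → ℝ^d`). -/
abbrev Mat (d N : ℕ) := Fin d → Fin N → ℝ

variable {N d : ℕ} {ι : Type*}

/-- Frobenius norm of a matrix. -/
def mnorm (ξ : Mat d N) : ℝ := Real.sqrt (∑ i, ∑ j, (ξ i j) ^ 2)

/-- Euclidean norm of a vector. -/
def vnorm {k : ℕ} (v : Fin k → ℝ) : ℝ := Real.sqrt (∑ i, (v i) ^ 2)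

/-- Partial derivative in the `j`-th coordinate direction. -/
def pder (j : Fin N) (φ : Dom N → ℝ) (x : Dom N) : ℝ := fderiv ℝ φ x (Pi.single j 1)

/-- Smooth test function compactly supported in `A`. -/
def IsTest (A : Set (Dom N)) (φ : Dom N → ℝ) : Prop :=
  ContDiff ℝ (⊤ : ℕ∞) φ ∧ HasCompactSupport φ ∧ tsupport φ ⊆ A

/-- `G` is a weak (distributional) gradient of `u` on `A`. -/
def IsWeakGrad (A : Set (Dom N)) (u : Dom N → Fin d → ℝ) (G : Dom N → Mat d N) : Prop :=
  ∀ φ : Dom N → ℝ, IsTest A φ → ∀ i j,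
    ∫ x in A, u x i * pder j φ x = - ∫ x in A, G x i j * φ x

/-- A choice of weak gradient of `u` on `A` (zero if none exists). -/
def weakGrad (A : Set (Dom N)) (u : Dom N → Fin d → ℝ) : Dom N → Mat d N :=
  if h : ∃ G, IsWeakGrad A u G then Classical.choose h else fun _ _ _ => 0

/-- Membership in `L^p(A)`. -/
def MemLpOn (p : ℝ) (A : Set (Dom N)) (v : Dom N → ℝ) : Prop :=
  AEStronglyMeasurable v (volume.restrict A) ∧
    (∫⁻ x in A, ENNReal.ofReal (|v x| ^ p)) < ⊤

/-- Membership in the Sobolev space `W^{1,p}(A; ℝ^d)`. -/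
def MemW1p (p : ℝ) (A : Set (Dom N)) (u : Dom N → Fin d → ℝ) : Prop :=
  (∀ i, MemLpOn p A fun x => u x i) ∧
  ∃ G, IsWeakGrad A u G ∧ ∀ i j, MemLpOn p A fun x => G x i j

/-- Membership in the local Sobolev space `W^{1,p}_loc(A; ℝ^d)`. -/
def MemW1ploc (p : ℝ) (A : Set (Dom N)) (u : Dom N → Fin d → ℝ) : Prop :=
  ∀ V : Set (Dom N), IsOpen V → IsCompact (closure V) → closure V ⊆ A → MemW1p p V u

/-- Membership in the dual Lebesgue space `L^{p'}(A)`, `p' = p/(p-1)` (`L^∞` if `p = 1`). -/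
def MemLconjOn (p : ℝ) (A : Set (Dom N)) (g : Dom N → ℝ) : Prop :=
  if p = 1 then AEStronglyMeasurable g (volume.restrict A) ∧ ∃ C, ∀ x, |g x| ≤ C
  else MemLpOn (p / (p - 1)) A g

/-- Weak convergence in `L^p(A)` along the filter `l`. -/
def WeakLp (l : Filter ι) (p : ℝ) (A : Set (Dom N)) (v : ι → Dom N → ℝ)
    (w : Dom N → ℝ) : Prop :=
  ∀ g : Dom N → ℝ, MemLconjOn p A g →
    Tendsto (fun n => ∫ x in A, v n x * g x) l (nhds (∫ x in A, w x * g x))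

/-- Weak convergence in `W^{1,p}(A; ℝ^d)` along the filter `l`. -/
def WeakW1p (l : Filter ι) (p : ℝ) (A : Set (Dom N)) (un : ι → Dom N → Fin d → ℝ)
    (u : Dom N → Fin d → ℝ) : Prop :=
  (∀ᶠ n in l, MemW1p p A (un n)) ∧ MemW1p p A u ∧
  (∀ i, WeakLp l p A (fun n x => un n x i) fun x => u x i) ∧
  (∀ i j, WeakLp l p A (fun n x => weakGrad A (un n) x i j) fun x => weakGrad A u x i j)

/-- Total variation `|Dχ|(A)` of a scalar function, by duality with smooth vector fields. -/
def tvar (A : Set (Dom N)) (χ : Dom N → ℝ) : ℝ≥0∞ :=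
  ⨆ (φ : {φ : Dom N → Fin N → ℝ //
      (∀ j, IsTest A fun x => φ x j) ∧ ∀ x, vnorm (φ x) ≤ 1}),
    ENNReal.ofReal (∫ x in A, χ x * ∑ j, pder j (fun y => φ.1 y j) x)

/-- `χ ∈ BV(A; {0,1})`. -/
def IsBVChar (A : Set (Dom N)) (χ : Dom N → ℝ) : Prop :=
  (∀ x, χ x = 0 ∨ χ x = 1) ∧ Integrable χ (volume.restrict A) ∧ tvar A χ < ⊤

/-- Weak-* convergence in `BV(A; {0,1})` along `l` (equivalently: strong `L¹`
convergence together with boundedness in `BV`). -/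
def BVWeakStarChar (l : Filter ι) (A : Set (Dom N)) (χn : ι → Dom N → ℝ)
    (χ : Dom N → ℝ) : Prop :=
  (∀ᶠ n in l, IsBVChar A (χn n)) ∧ IsBVChar A χ ∧
  (∃ C : ℝ≥0∞, C < ⊤ ∧ ∀ᶠ n in l, tvar A (χn n) ≤ C) ∧
  Tendsto (fun n => ∫ x in A, |χn n x - χ x|) l (nhds 0)

/-- `u ∈ BV(A; ℝ^d)` (componentwise). -/
def MemBV (A : Set (Dom N)) (u : Dom N → Fin d → ℝ) : Prop :=
  (∀ i, Integrable (fun x => u x i) (volume.restrict A)) ∧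
  ∀ i, tvar A (fun x => u x i) < ⊤

/-- Weak-* convergence in `BV(A; ℝ^d)` along `l`. -/
def BVWeakStarVec (l : Filter ι) (A : Set (Dom N)) (un : ι → Dom N → Fin d → ℝ)
    (u : Dom N → Fin d → ℝ) : Prop :=
  (∀ᶠ n in l, MemBV A (un n)) ∧ MemBV A u ∧
  (∃ C : ℝ≥0∞, C < ⊤ ∧ ∀ᶠ n in l, ∀ i, tvar A (fun x => un n x i) ≤ C) ∧
  ∀ i, Tendsto (fun n => ∫ x in A, |un n x i - u x i|) l (nhds 0)

/-- The optimal-design bulk density `f(b,ξ) = b W₁(ξ) + (1-b) W₂(ξ)`. -/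
def fOD (W1 W2 : Mat d N → ℝ) (b : ℝ) (ξ : Mat d N) : ℝ := b * W1 ξ + (1 - b) * W2 ξ

/-- The localized energy `F(χ,u;A) = ∫_A f(χ,∇u) dx + |Dχ|(A)`. -/
def energyF (W1 W2 : Mat d N → ℝ) (A : Set (Dom N)) (χ : Dom N → ℝ)
    (u : Dom N → Fin d → ℝ) : ℝ≥0∞ :=
  (∫⁻ x in A, ENNReal.ofReal (fOD W1 W2 (χ x) (weakGrad A u x))) + tvar A χ

/-- The relaxed functional `𝓕(χ,u;A)` (admissible: `u_n ∈ W^{1,q}`, `u_n ⇀ u` in `W^{1,p}`,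
`χ_n ⇀* χ` in `BV(A;{0,1})`). -/
def relF (p q : ℝ) (W1 W2 : Mat d N → ℝ) (A : Set (Dom N)) (χ : Dom N → ℝ)
    (u : Dom N → Fin d → ℝ) : ℝ≥0∞ :=
  ⨅ (s : {s : (ℕ → Dom N → Fin d → ℝ) × (ℕ → Dom N → ℝ) //
      (∀ n, MemW1p q A (s.1 n)) ∧ WeakW1p atTop p A s.1 u ∧ BVWeakStarChar atTop A s.2 χ}),
    Filter.liminf (fun n => energyF W1 W2 A (s.1.2 n) (s.1.1 n)) atTop

/-- The relaxed functional `𝓕_loc(χ,u;A)` (with `u_n ∈ W^{1,q}_loc`). -/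
def relFloc (p q : ℝ) (W1 W2 : Mat d N → ℝ) (A : Set (Dom N)) (χ : Dom N → ℝ)
    (u : Dom N → Fin d → ℝ) : ℝ≥0∞ :=
  ⨅ (s : {s : (ℕ → Dom N → Fin d → ℝ) × (ℕ → Dom N → ℝ) //
      (∀ n, MemW1ploc q A (s.1 n)) ∧ WeakW1p atTop p A s.1 u ∧ BVWeakStarChar atTop A s.2 χ}),
    Filter.liminf (fun n => energyF W1 W2 A (s.1.2 n) (s.1.1 n)) atTop

/-- The relaxed functional `𝓕₁(χ,u;A)` for `p = 1` (with `u_n ⇀* u` in `BV(A;ℝ^d)`). -/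
def relF1 (q : ℝ) (W1 W2 : Mat d N → ℝ) (A : Set (Dom N)) (χ : Dom N → ℝ)
    (u : Dom N → Fin d → ℝ) : ℝ≥0∞ :=
  ⨅ (s : {s : (ℕ → Dom N → Fin d → ℝ) × (ℕ → Dom N → ℝ) //
      (∀ n, MemW1p q A (s.1 n)) ∧ BVWeakStarVec atTop A s.1 u ∧ BVWeakStarChar atTop A s.2 χ}),
    Filter.liminf (fun n => energyF W1 W2 A (s.1.2 n) (s.1.1 n)) atTop

/-- The relaxed functional `𝓕_{1,loc}(χ,u;A)`. -/
def relF1loc (q : ℝ) (W1 W2 : Mat d N → ℝ) (A : Set (Dom N)) (χ : Dom N → ℝ)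
    (u : Dom N → Fin d → ℝ) : ℝ≥0∞ :=
  ⨅ (s : {s : (ℕ → Dom N → Fin d → ℝ) × (ℕ → Dom N → ℝ) //
      (∀ n, MemW1ploc q A (s.1 n)) ∧ BVWeakStarVec atTop A s.1 u ∧ BVWeakStarChar atTop A s.2 χ}),
    Filter.liminf (fun n => energyF W1 W2 A (s.1.2 n) (s.1.1 n)) atTop

/-- The relaxed functional `𝓖₁(χ,u;A)` (`u_n ∈ W^{1,q}`, `u_n ⇀ u` weakly in `W^{1,1}`). -/
def relG1 (q : ℝ) (W1 W2 : Mat d N → ℝ) (A : Set (Dom N)) (χ : Dom N → ℝ)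
    (u : Dom N → Fin d → ℝ) : ℝ≥0∞ :=
  ⨅ (s : {s : (ℕ → Dom N → Fin d → ℝ) × (ℕ → Dom N → ℝ) //
      (∀ n, MemW1p q A (s.1 n)) ∧ WeakW1p atTop 1 A s.1 u ∧ BVWeakStarChar atTop A s.2 χ}),
    Filter.liminf (fun n => energyF W1 W2 A (s.1.2 n) (s.1.1 n)) atTop

/-- The relaxed functional `𝓖_{1,loc}(χ,u;A)`. -/
def relG1loc (q : ℝ) (W1 W2 : Mat d N → ℝ) (A : Set (Dom N)) (χ : Dom N → ℝ)
    (u : Dom N → Fin d → ℝ) : ℝ≥0∞ :=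
  ⨅ (s : {s : (ℕ → Dom N → Fin d → ℝ) × (ℕ → Dom N → ℝ) //
      (∀ n, MemW1ploc q A (s.1 n)) ∧ WeakW1p atTop 1 A s.1 u ∧ BVWeakStarChar atTop A s.2 χ}),
    Filter.liminf (fun n => energyF W1 W2 A (s.1.2 n) (s.1.1 n)) atTop

/-- The functional `Ĩ(χ,u;A)`: infimum over all `u_n ⇀ u` weakly in `W^{1,p}` (no higher
integrability required) and `χ_n ⇀* χ` in `BV(A;{0,1})`. -/
def tildeI (p : ℝ) (W1 W2 : Mat d N → ℝ) (A : Set (Dom N)) (χ : Dom N → ℝ)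
    (u : Dom N → Fin d → ℝ) : ℝ≥0∞ :=
  ⨅ (s : {s : (ℕ → Dom N → Fin d → ℝ) × (ℕ → Dom N → ℝ) //
      WeakW1p atTop p A s.1 u ∧ BVWeakStarChar atTop A s.2 χ}),
    Filter.liminf (fun n => energyF W1 W2 A (s.1.2 n) (s.1.1 n)) atTop

/-- Growth condition `0 ≤ W(ξ) ≤ β (1 + |ξ|^q)`. -/
def Growth (β q : ℝ) (W : Mat d N → ℝ) : Prop :=
  ∀ ξ, 0 ≤ W ξ ∧ W ξ ≤ β * (1 + mnorm ξ ^ q)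

/-- The exponent regime `1 < p ≤ q < Np/(N-1)` (with `q < ∞` if `N = 1`). -/
def ExpOK (N : ℕ) (p q : ℝ) : Prop :=
  1 < p ∧ p ≤ q ∧ (N = 1 ∨ q * ((N : ℝ) - 1) < N * p)

/-- The exponent regime `p = 1`, `1 ≤ q < N/(N-1)` (with `q < ∞` if `N = 1`). -/
def Exp1OK (N : ℕ) (q : ℝ) : Prop :=
  1 ≤ q ∧ (N = 1 ∨ q * ((N : ℝ) - 1) < (N : ℝ))

/-- `μ` weakly represents the set function `G` on the open subsets of `Ω`. -/
def WeakRep (G : Set (Dom N) → ℝ≥0∞) (Ω : Set (Dom N)) (μ : Measure (Dom N)) : Prop :=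
  ∀ A : Set (Dom N), IsOpen A → A ⊆ Ω → μ A ≤ G A ∧ G A ≤ μ (closure A)

/-- Morrey quasiconvexity (with `W^{1,∞}_0` test functions). -/
def IsQcx (g : Mat d N → ℝ) : Prop :=
  ∀ D : Set (Dom N), IsOpen D → Bornology.IsBounded D → D.Nonempty →
  ∀ ξ : Mat d N, ∀ φ : Dom N → Fin d → ℝ,
    (∃ L, LipschitzWith L φ) → HasCompactSupport φ → tsupport φ ⊆ D →
    g ξ * (volume D).toReal ≤
      ∫ x in D, g fun i j => ξ i j + fderiv ℝ (fun y => φ y i) x (Pi.single j 1)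

/-- Quasiconvex envelope: the greatest quasiconvex function below `g`. -/
def qcEnv (g : Mat d N → ℝ) (ξ : Mat d N) : ℝ :=
  sSup {t | ∃ h : Mat d N → ℝ, IsQcx h ∧ (∀ ζ, h ζ ≤ g ζ) ∧ t = h ξ}

/-- Convex envelope: the greatest convex function below `g`. -/
def convEnv {V : Type*} [AddCommMonoid V] [Module ℝ V] (g : V → ℝ) (ξ : V) : ℝ :=
  sSup {t | ∃ h : V → ℝ, ConvexOn ℝ (Set.univ : Set V) h ∧ (∀ ζ, h ζ ≤ g ζ) ∧ t = h ξ}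

/-- Barycenter of a measure on matrix space. -/
def baryc (μ : Measure (Mat d N)) : Mat d N := ∫ ξ, ξ ∂μ

/-- The class `𝓜^p`: probability measures with finite `p`-th moment satisfying Jensen's
inequality for all quasiconvex functions with `p`-growth (homogeneous `W^{1,p}`-gradient
Young measures). -/
def MemMp (p : ℝ) (μ : Measure (Mat d N)) : Prop :=
  IsProbabilityMeasure μ ∧ (∫⁻ ξ, ENNReal.ofReal (mnorm ξ ^ p) ∂μ) < ⊤ ∧
  ∀ g : Mat d N → ℝ, IsQcx g → (∃ C, ∀ ξ, |g ξ| ≤ C * (1 + mnorm ξ ^ p)) →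
    Integrable g μ → g (baryc μ) ≤ ∫ ξ, g ξ ∂μ

/-- Closed `W^{1,p}`-quasiconvexity: lower semicontinuity plus Jensen's inequality for
all measures in `𝓜^p`. -/
def IsClosedW1pQcx (p : ℝ) (g : Mat d N → ℝ) : Prop :=
  LowerSemicontinuous g ∧
  ∀ μ : Measure (Mat d N), MemMp p μ → Integrable g μ → g (baryc μ) ≤ ∫ ξ, g ξ ∂μ

/-- Closed `W^{1,p}`-quasiconvex envelope. -/
def cqcxEnv (p : ℝ) (g : Mat d N → ℝ) (ξ : Mat d N) : ℝ :=
  sSup {t | ∃ h : Mat d N → ℝ, IsClosedW1pQcx p h ∧ (∀ ζ, h ζ ≤ g ζ) ∧ t = h ξ}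

/-! ### Dimension reduction (3D–1D) machinery -/

/-- The matrix with prescribed columns. -/
def colMk (c1 c2 c3 : Fin 3 → ℝ) : Mat 3 3 := fun i => ![c1 i, c2 i, c3 i]

/-- Anisotropic rescaling `(ε⁻¹ ξ₁, ε⁻¹ ξ₂, ξ₃)` of the columns of a matrix. -/
def scaledMat (ε : ℝ) (ξ : Mat 3 3) : Mat 3 3 := fun i j => if j = 2 then ξ i j else ξ i j / ε

/-- The scaled total variation `|(ε⁻¹ D_α χ, D₃ χ)|(A)`. -/
def tvarScaled (ε : ℝ) (A : Set (Dom 3)) (χ : Dom 3 → ℝ) : ℝ≥0∞ :=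
  ⨆ (φ : {φ : Dom 3 → Fin 3 → ℝ //
      (∀ j, IsTest A fun x => φ x j) ∧ ∀ x, vnorm (φ x) ≤ 1}),
    ENNReal.ofReal (∫ x in A, χ x *
      (pder 0 (fun y => φ.1 y 0) x / ε + pder 1 (fun y => φ.1 y 1) x / ε +
        pder 2 (fun y => φ.1 y 2) x))

/-- The rescaled 3D energy at thickness parameter `ε`. -/
def energyDR (W1 W2 : Mat 3 3 → ℝ) (A : Set (Dom 3)) (ε : ℝ) (χ : Dom 3 → ℝ)
    (u : Dom 3 → Fin 3 → ℝ) : ℝ≥0∞ :=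
  (∫⁻ x in A, ENNReal.ofReal (fOD W1 W2 (χ x) (scaledMat ε (weakGrad A u x)))) +
    tvarScaled ε A χ

/-- The filter `ε → 0⁺`. -/
def εfilter : Filter ℝ := nhdsWithin 0 (Set.Ioi 0)

/-- The dimension-reduction relaxed functional `𝓕^{DR}(χ,u)` on the domain `A`. -/
def FDR (p q : ℝ) (W1 W2 : Mat 3 3 → ℝ) (A : Set (Dom 3)) (χ : Dom 3 → ℝ)
    (u : Dom 3 → Fin 3 → ℝ) : ℝ≥0∞ :=
  ⨅ (s : {s : (ℝ → Dom 3 → Fin 3 → ℝ) × (ℝ → Dom 3 → ℝ) //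
      (∀ ε, 0 < ε → MemW1p q A (s.1 ε) ∧ IsBVChar A (s.2 ε)) ∧
      WeakW1p εfilter p A s.1 u ∧ BVWeakStarChar εfilter A s.2 χ}),
    Filter.liminf (fun ε => energyDR W1 W2 A ε (s.1.2 ε) (s.1.1 ε)) εfilter

/-- The rescaled cylinder `B(0,1) × (0,l) ⊂ ℝ³`. -/
def ΩDR (l : ℝ) : Set (Dom 3) := {x | (x 0) ^ 2 + (x 1) ^ 2 < 1 ∧ 0 < x 2 ∧ x 2 < l}

/-- `f₀(b,ξ₃) := inf_{ξ₁,ξ₂} f(b,ξ₁,ξ₂,ξ₃)` (per fixed `b`, acting on one density). -/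
def f0W (W : Mat 3 3 → ℝ) (ξ3 : Fin 3 → ℝ) : ℝ :=
  sInf {t | ∃ c1 c2 : Fin 3 → ℝ, t = W (colMk c1 c2 ξ3)}

/-- Frobenius inner product on `3×3` matrices. -/
def finner (ξ ζ : Mat 3 3) : ℝ := ∑ i, ∑ j, ξ i j * ζ i j

/-- Legendre–Fenchel conjugate (in the matrix variable). -/
def LFconj (g : Mat 3 3 → ℝ) (ξs : Mat 3 3) : EReal :=
  ⨆ ξ : Mat 3 3, ((finner ξ ξs - g ξ : ℝ) : EReal)

/-- Coercive growth condition `c|ξ|^p - c₀ ≤ W(ξ) ≤ C(1 + |ξ|^q)`. -/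
def GrowthC (c c0 C p q : ℝ) (W : Mat 3 3 → ℝ) : Prop :=
  ∀ ξ, c * mnorm ξ ^ p - c0 ≤ W ξ ∧ W ξ ≤ C * (1 + mnorm ξ ^ q)

end ODRelax

/-! Both parts are diagonal arguments. Coercivity `W_i(ξ) ≥ α|ξ|` bounds the total variation
of every component of `u_n` by `F(χ_n,u_n)/α`, so any sequence with bounded energy that
converges in `L¹` is admissible in the definition of `𝓕₁`. For (a), pick for each `k` an
admissible sequence with `liminf` energy below `𝓕₁(χ,u) + 1/k`, and take one of its terms
that has energy below this bound and is `1/k`-close to `(χ,u)` in `L¹`. For (b), do the same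
around `(χ_{n_k},u_{n_k})`, along a subsequence realizing the `liminf` of `𝓕₁(χ_n,u_n)`. -/

namespace ODRelax

variable {N d : ℕ}

lemma IsTest.continuous_pder {A : Set (Dom N)} {φ : Dom N → ℝ} (hφ : IsTest A φ) (j : Fin N) :
    Continuous (pder j φ) :=
  (hφ.1.continuous_fderiv (by simp)).clm_apply continuous_const

lemma IsTest.integrable_mul_pder {A : Set (Dom N)} {φ : Dom N → ℝ} (hφ : IsTest A φ)
    (j : Fin N) {μ : Measure (Dom N)} {v : Dom N → ℝ} (hv : Integrable v μ) :
    Integrable (fun x => v x * pder j φ x) μ := by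
  obtain ⟨C, hC⟩ := (hφ.2.1.fderiv_apply (𝕜 := ℝ) (Pi.single j 1)).exists_bound_of_continuous
    (hφ.continuous_pder j)
  exact hv.mul_bdd (hφ.continuous_pder j).aestronglyMeasurable (.of_forall hC)

lemma MemLpOn.integrable {Ω : Set (Dom N)} (hΩ : volume Ω < ⊤) {q : ℝ} (hq : 1 ≤ q)
    {v : Dom N → ℝ} (hv : MemLpOn q Ω v) : Integrable v (volume.restrict Ω) := by
  refine ⟨hv.1, ?_⟩
  have hpt : ∀ x, ‖v x‖ₑ ≤ 1 + ENNReal.ofReal (|v x| ^ q) := by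
    intro x
    rw [Real.enorm_eq_ofReal_abs]
    rcases le_total |v x| 1 with h | h
    · exact le_add_right (ENNReal.ofReal_le_one.2 h)
    · refine le_add_left (ENNReal.ofReal_le_ofReal ?_)
      simpa using Real.rpow_le_rpow_of_exponent_le h hq
  calc ∫⁻ x in Ω, ‖v x‖ₑ
      ≤ ∫⁻ x in Ω, (1 + ENNReal.ofReal (|v x| ^ q)) := lintegral_mono hpt
    _ = volume Ω + ∫⁻ x in Ω, ENNReal.ofReal (|v x| ^ q) := by
        rw [lintegral_add_left measurable_const, setLIntegral_const, one_mul]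
    _ < ⊤ := ENNReal.add_lt_top.2 ⟨hΩ, hv.2⟩

lemma isWeakGrad_weakGrad {Ω : Set (Dom N)} {v : Dom N → Fin d → ℝ} {q : ℝ}
    (hv : MemW1p q Ω v) : IsWeakGrad Ω v (weakGrad Ω v) := by
  have hex : ∃ G, IsWeakGrad Ω v G := ⟨hv.2.choose, hv.2.choose_spec.1⟩
  rw [weakGrad, dif_pos hex]
  exact hex.choose_spec

lemma abs_sum_mul_le_mnorm (G : Mat d N) (i : Fin d) {φ : Fin N → ℝ} (hφ : vnorm φ ≤ 1)
    (t : Finset (Fin N)) : |∑ j ∈ t, G i j * φ j| ≤ mnorm G := by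
  have hG : √(∑ j ∈ t, G i j ^ 2) ≤ mnorm G := by
    refine Real.sqrt_le_sqrt ((Finset.sum_le_sum_of_subset_of_nonneg t.subset_univ
      fun j _ _ => sq_nonneg _).trans ?_)
    exact Finset.single_le_sum (f := fun i' => ∑ j, G i' j ^ 2)
      (fun i' _ => Finset.sum_nonneg fun j _ => sq_nonneg _) (Finset.mem_univ i)
  have hφt : √(∑ j ∈ t, φ j ^ 2) ≤ 1 :=
    (Real.sqrt_le_sqrt (Finset.sum_le_sum_of_subset_of_nonneg t.subset_univ
      fun j _ _ => sq_nonneg _)).trans hφ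
  have hCS : ∀ ψ : Fin N → ℝ, (∀ j, ψ j ^ 2 = φ j ^ 2) →
      ∑ j ∈ t, G i j * ψ j ≤ mnorm G := fun ψ hψ =>
    calc ∑ j ∈ t, G i j * ψ j ≤ √(∑ j ∈ t, G i j ^ 2) * √(∑ j ∈ t, ψ j ^ 2) :=
          Real.sum_mul_le_sqrt_mul_sqrt _ _ _
      _ ≤ mnorm G * 1 := by
          simp only [hψ]
          exact mul_le_mul hG hφt (Real.sqrt_nonneg _) ((Real.sqrt_nonneg _).trans hG)
      _ = mnorm G := mul_one _
  refine abs_le.2 ⟨?_, hCS φ fun _ => rfl⟩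
  have := hCS (fun j => -φ j) fun j => neg_sq _
  simp only [mul_neg, Finset.sum_neg_distrib] at this
  linarith

/-- A non-integrable `g j` has `∫ g j = 0`, so only the integrable terms are moved under the
integral sign; this is why the bound is asked of every subfamily. -/
lemma ofReal_sum_integral_le_lintegral {α ι : Type*} [MeasurableSpace α] {μ : Measure α}
    (s : Finset ι) {g : ι → α → ℝ} {b : α → ℝ} (hb : ∀ t ⊆ s, ∀ x, |∑ j ∈ t, g j x| ≤ b x) :
    ENNReal.ofReal (∑ j ∈ s, ∫ x, g j x ∂μ) ≤ ∫⁻ x, ENNReal.ofReal (b x) ∂μ := by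
  classical
  set J := s.filter fun j => Integrable (g j) μ
  have hJ : ∑ j ∈ J, ∫ x, g j x ∂μ = ∑ j ∈ s, ∫ x, g j x ∂μ :=
    Finset.sum_filter_of_ne fun j _ h => by_contra fun hj => h (integral_undef hj)
  rw [← hJ, ← integral_finsetSum _ fun j hj => (Finset.mem_filter.1 hj).2]
  calc ENNReal.ofReal (∫ x, ∑ j ∈ J, g j x ∂μ)
      ≤ ‖∫ x, ∑ j ∈ J, g j x ∂μ‖ₑ := by
        rw [Real.enorm_eq_ofReal_abs]; exact ENNReal.ofReal_le_ofReal (le_abs_self _)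
    _ ≤ ∫⁻ x, ‖∑ j ∈ J, g j x‖ₑ ∂μ := enorm_integral_le_lintegral_enorm _
    _ ≤ ∫⁻ x, ENNReal.ofReal (b x) ∂μ := lintegral_mono fun x => by
        rw [Real.enorm_eq_ofReal_abs]
        exact ENNReal.ofReal_le_ofReal (hb J (Finset.filter_subset _ _) x)

lemma tvar_le_lintegral_mnorm {Ω : Set (Dom N)} {v : Dom N → Fin d → ℝ} {G : Dom N → Mat d N}
    (hv : ∀ i, Integrable (fun x => v x i) (volume.restrict Ω)) (hG : IsWeakGrad Ω v G)
    (i : Fin d) : tvar Ω (fun x => v x i) ≤ ∫⁻ x in Ω, ENNReal.ofReal (mnorm (G x)) := by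
  refine iSup_le fun ⟨φ, hT, hφ⟩ => ?_
  have hibp : ∫ x in Ω, v x i * ∑ j, pder j (fun y => φ y j) x =
      ∑ j, ∫ x in Ω, -(G x i j * φ x j) := by
    simp_rw [Finset.mul_sum]
    rw [integral_finsetSum _ fun j _ => (hT j).integrable_mul_pder j (hv i)]
    exact Finset.sum_congr rfl fun j _ => by rw [hG _ (hT j) i j, integral_neg]
  rw [hibp]
  refine ofReal_sum_integral_le_lintegral _ fun t _ x => ?_
  rw [Finset.sum_neg_distrib, abs_neg]
  exact abs_sum_mul_le_mnorm (G x) i (hφ x) t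

lemma mul_mnorm_le_fOD {W1 W2 : Mat d N → ℝ} {α : ℝ}
    (hC1 : ∀ ξ, α * mnorm ξ ≤ W1 ξ) (hC2 : ∀ ξ, α * mnorm ξ ≤ W2 ξ)
    {b : ℝ} (hb : b = 0 ∨ b = 1) (ξ : Mat d N) : α * mnorm ξ ≤ fOD W1 W2 b ξ := by
  rcases hb with rfl | rfl <;> simp [fOD, hC1, hC2]

lemma tvar_le_energyF_div {Ω : Set (Dom N)} (hΩ : volume Ω < ⊤) {q : ℝ} (hq : 1 ≤ q)
    {W1 W2 : Mat d N → ℝ} {α : ℝ} (hα : 0 < α)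
    (hC1 : ∀ ξ, α * mnorm ξ ≤ W1 ξ) (hC2 : ∀ ξ, α * mnorm ξ ≤ W2 ξ)
    {χ : Dom N → ℝ} (hχ : ∀ x, χ x = 0 ∨ χ x = 1)
    {v : Dom N → Fin d → ℝ} (hv : MemW1p q Ω v) (i : Fin d) :
    tvar Ω (fun x => v x i) ≤ energyF W1 W2 Ω χ v / ENNReal.ofReal α := by
  refine (tvar_le_lintegral_mnorm (fun i => (hv.1 i).integrable hΩ hq)
    (isWeakGrad_weakGrad hv) i).trans ((ENNReal.le_div_iff_mul_le
      (.inl (ENNReal.ofReal_pos.2 hα).ne') (.inl ENNReal.ofReal_ne_top)).2 ?_)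
  rw [← lintegral_mul_const' _ _ ENNReal.ofReal_ne_top]
  refine (lintegral_mono fun x => ?_).trans le_self_add
  rw [mul_comm, ← ENNReal.ofReal_mul hα.le]
  exact ENNReal.ofReal_le_ofReal (mul_mnorm_le_fOD hC1 hC2 (hχ x) _)

lemma integral_abs_sub_le_add {α : Type*} [MeasurableSpace α] {μ : Measure α}
    {a b c : α → ℝ} (ha : Integrable a μ) (hb : Integrable b μ) (hc : Integrable c μ) :
    ∫ x, |a x - c x| ∂μ ≤ ∫ x, |a x - b x| ∂μ + ∫ x, |b x - c x| ∂μ := by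
  have hab : Integrable (fun x => |a x - b x|) μ := (ha.sub hb).abs
  have hbc : Integrable (fun x => |b x - c x|) μ := (hb.sub hc).abs
  rw [← integral_add hab hbc]
  exact integral_mono (ha.sub hc).abs (hab.add hbc) fun x => abs_sub_le _ _ _

lemma tendsto_integral_abs_sub_of_lt {α : Type*} [MeasurableSpace α] {μ : Measure α}
    {a b : ℕ → α → ℝ} {c : α → ℝ} (ha : ∀ k, Integrable (a k) μ)
    (hb : ∀ k, Integrable (b k) μ) (hc : Integrable c μ)
    (hab : ∀ k, ∫ x, |a k x - b k x| ∂μ < 1 / ((k : ℝ) + 1))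
    (hbc : Tendsto (fun k => ∫ x, |b k x - c x| ∂μ) atTop (𝓝 0)) :
    Tendsto (fun k => ∫ x, |a k x - c x| ∂μ) atTop (𝓝 0) := by
  refine squeeze_zero (fun k => integral_nonneg fun x => abs_nonneg _)
    (fun k => (integral_abs_sub_le_add (ha k) (hb k) hc).trans (add_le_add (hab k).le le_rfl)) ?_
  simpa using tendsto_one_div_add_atTop_nhds_zero_nat.add hbc

lemma relF1_le_liminf {q : ℝ} {W1 W2 : Mat d N → ℝ} {Ω : Set (Dom N)} {χ : Dom N → ℝ}
    {u : Dom N → Fin d → ℝ} {un : ℕ → Dom N → Fin d → ℝ} {χn : ℕ → Dom N → ℝ}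
    (hW : ∀ n, MemW1p q Ω (un n)) (hVec : BVWeakStarVec atTop Ω un u)
    (hChar : BVWeakStarChar atTop Ω χn χ) :
    relF1 q W1 W2 Ω χ u ≤ liminf (fun n => energyF W1 W2 Ω (χn n) (un n)) atTop :=
  iInf_le (fun s : {s : (ℕ → Dom N → Fin d → ℝ) × (ℕ → Dom N → ℝ) //
      (∀ n, MemW1p q Ω (s.1 n)) ∧ BVWeakStarVec atTop Ω s.1 u ∧ BVWeakStarChar atTop Ω s.2 χ} =>
    liminf (fun n => energyF W1 W2 Ω (s.1.2 n) (s.1.1 n)) atTop) ⟨(un, χn), hW, hVec, hChar⟩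

lemma exists_near_of_relF1_lt {q : ℝ} {W1 W2 : Mat d N → ℝ} {Ω : Set (Dom N)}
    {χ : Dom N → ℝ} {u : Dom N → Fin d → ℝ} {c : ℝ≥0∞} (h : relF1 q W1 W2 Ω χ u < c)
    {δ : ℝ} (hδ : 0 < δ) :
    ∃ (w : Dom N → Fin d → ℝ) (ψ : Dom N → ℝ), MemW1p q Ω w ∧ MemBV Ω w ∧ IsBVChar Ω ψ ∧
      (∀ i, ∫ x in Ω, |w x i - u x i| < δ) ∧ ∫ x in Ω, |ψ x - χ x| < δ ∧
      energyF W1 W2 Ω ψ w < c := by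
  obtain ⟨⟨⟨un, χn⟩, hW, hVec, hChar⟩, hs⟩ := iInf_lt_iff.1 h
  obtain ⟨n, hE, hBV, hχn, hu, hχ⟩ := ((frequently_lt_of_liminf_lt (h := hs)).and_eventually
    (hVec.1.and (hChar.1.and ((eventually_all.2 fun i =>
      (hVec.2.2.2 i).eventually_lt_const hδ).and (hChar.2.2.2.eventually_lt_const hδ))))).exists
  exact ⟨un n, χn n, hW n, hBV, hχn, hu, hχ, hE⟩

lemma exists_admissible_limsup_energyF_le {q : ℝ} (hq : 1 ≤ q) {Ω : Set (Dom N)}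
    (hΩ : volume Ω < ⊤) {W1 W2 : Mat d N → ℝ} {α : ℝ} (hα : 0 < α)
    (hC1 : ∀ ξ, α * mnorm ξ ≤ W1 ξ) (hC2 : ∀ ξ, α * mnorm ξ ≤ W2 ξ)
    {χ : Dom N → ℝ} {u : Dom N → Fin d → ℝ} (hχ : IsBVChar Ω χ) (hu : MemBV Ω u)
    {χs : ℕ → Dom N → ℝ} {us : ℕ → Dom N → Fin d → ℝ}
    (hχs : ∀ k, Integrable (χs k) (volume.restrict Ω))
    (hus : ∀ k i, Integrable (fun x => us k x i) (volume.restrict Ω))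
    (hχs_lim : Tendsto (fun k => ∫ x in Ω, |χs k x - χ x|) atTop (𝓝 0))
    (hus_lim : ∀ i, Tendsto (fun k => ∫ x in Ω, |us k x i - u x i|) atTop (𝓝 0))
    {c : ℕ → ℝ≥0∞} {c₀ : ℝ≥0∞} (hlt : ∀ k, relF1 q W1 W2 Ω (χs k) (us k) < c k)
    (hc : Tendsto c atTop (𝓝 c₀)) (hc₀ : c₀ < ⊤) :
    ∃ (w : ℕ → Dom N → Fin d → ℝ) (ψ : ℕ → Dom N → ℝ), (∀ k, MemW1p q Ω (w k)) ∧
      BVWeakStarVec atTop Ω w u ∧ BVWeakStarChar atTop Ω ψ χ ∧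
      limsup (fun k => energyF W1 W2 Ω (ψ k) (w k)) atTop ≤ c₀ := by
  choose w ψ hw hwBV hψ hwu hψχ hE using
    fun k => exists_near_of_relF1_lt (hlt k) (Nat.one_div_pos_of_nat (n := k))
  have hE_le : ∀ᶠ k in atTop, energyF W1 W2 Ω (ψ k) (w k) ≤ c₀ + 1 :=
    (hc.eventually (gt_mem_nhds (ENNReal.lt_add_right hc₀.ne one_ne_zero))).mono
      fun k hk => (hE k).le.trans hk.le
  have hC : c₀ + 1 < ⊤ := ENNReal.add_lt_top.2 ⟨hc₀, ENNReal.one_lt_top⟩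
  refine ⟨w, ψ, hw, ⟨.of_forall hwBV, hu, ⟨(c₀ + 1) / ENNReal.ofReal α,
    ENNReal.div_lt_top hC.ne (ENNReal.ofReal_pos.2 hα).ne', hE_le.mono fun k hk i =>
      (tvar_le_energyF_div hΩ hq hα hC1 hC2 (hψ k).1 (hw k) i).trans
        (ENNReal.div_le_div_right hk _)⟩, fun i => ?_⟩,
    ⟨.of_forall hψ, hχ, ⟨c₀ + 1, hC, hE_le.mono fun k hk => le_add_self.trans hk⟩, ?_⟩, ?_⟩
  · exact tendsto_integral_abs_sub_of_lt (fun k => (hwBV k).1 i) (fun k => hus k i) (hu.1 i)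
      (fun k => hwu k i) (hus_lim i)
  · exact tendsto_integral_abs_sub_of_lt (fun k => (hψ k).2.1) hχs hχ.2.1 hψχ hχs_lim
  · calc limsup (fun k => energyF W1 W2 Ω (ψ k) (w k)) atTop ≤ limsup c atTop :=
          limsup_le_limsup (.of_forall fun k => (hE k).le)
      _ = c₀ := hc.limsup_eq

end ODRelax

open ODRelax in
theorem stmt2_general {N d : ℕ} (q : ℝ) (hexp : Exp1OK N q)
    (Ω : Set (Dom N)) (hΩb : Bornology.IsBounded Ω)
    (W1 W2 : Mat d N → ℝ)
    (α : ℝ) (hα : 0 < α)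
    (hC1 : ∀ ξ, α * mnorm ξ ≤ W1 ξ) (hC2 : ∀ ξ, α * mnorm ξ ≤ W2 ξ)
    (χ : Dom N → ℝ) (u : Dom N → Fin d → ℝ)
    (hχ : IsBVChar Ω χ) (hu : MemBV Ω u) :
    (relF1 q W1 W2 Ω χ u < ⊤ →
      ∃ (un : ℕ → Dom N → Fin d → ℝ) (χn : ℕ → Dom N → ℝ),
        (∀ n, MemW1p q Ω (un n)) ∧ BVWeakStarVec Filter.atTop Ω un u ∧
        BVWeakStarChar Filter.atTop Ω χn χ ∧
        Filter.Tendsto (fun n => energyF W1 W2 Ω (χn n) (un n)) Filter.atTop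
          (nhds (relF1 q W1 W2 Ω χ u))) ∧
    (∀ (un : ℕ → Dom N → Fin d → ℝ) (χn : ℕ → Dom N → ℝ),
      (∀ n, MemW1p q Ω (un n)) → (∀ n, IsBVChar Ω (χn n)) →
      BVWeakStarVec Filter.atTop Ω un u → BVWeakStarChar Filter.atTop Ω χn χ →
      (∀ n, relF1 q W1 W2 Ω (χn n) (un n) < ⊤) →
      relF1 q W1 W2 Ω χ u ≤
        Filter.liminf (fun n => relF1 q W1 W2 Ω (χn n) (un n)) Filter.atTop) := by
  have hq : 1 ≤ q := hexp.1
  have hΩ : volume Ω < ⊤ := hΩb.measure_lt_top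
  have htend : ∀ {a : ℕ → ℝ≥0∞} {a₀ : ℝ≥0∞}, Tendsto a atTop (𝓝 a₀) →
      Tendsto (fun k => a k + (k : ℝ≥0∞)⁻¹) atTop (𝓝 a₀) := fun ha => by
    simpa using ha.add ENNReal.tendsto_inv_nat_nhds_zero
  have hlt_add : ∀ {a : ℝ≥0∞} (k : ℕ), a < ⊤ → a < a + (k : ℝ≥0∞)⁻¹ := fun k ha =>
    ENNReal.lt_add_right ha.ne (ENNReal.inv_ne_zero.2 (ENNReal.natCast_ne_top k))
  refine ⟨fun hfin => ?_, fun un χn hW hχn hVec hChar hfin => ?_⟩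
  · obtain ⟨w, ψ, hw, hVecw, hCharw, hsup⟩ := exists_admissible_limsup_energyF_le hq hΩ hα
      hC1 hC2 hχ hu (fun _ => hχ.2.1) (fun _ => hu.1) (by simp) (by simp)
      (fun k => hlt_add k hfin) (htend tendsto_const_nhds) hfin
    exact ⟨w, ψ, hw, hVecw, hCharw,
      tendsto_of_le_liminf_of_limsup_le (relF1_le_liminf hw hVecw hCharw) hsup⟩
  · set L := liminf (fun n => relF1 q W1 W2 Ω (χn n) (un n)) atTop
    rcases eq_top_or_lt_top L with hL | hL
    · exact hL ▸ le_top
    obtain ⟨σ, hσL, hσ⟩ := exists_seq_tendsto_liminf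
      (u := fun n => relF1 q W1 W2 Ω (χn n) (un n)) (f := atTop)
    obtain ⟨w, ψ, hw, hVecw, hCharw, hsup⟩ := exists_admissible_limsup_energyF_le hq hΩ hα
      hC1 hC2 hχ hu (fun k => (hχn (σ k)).2.1) (fun k i => ((hW (σ k)).1 i).integrable hΩ hq)
      (hChar.2.2.2.comp hσ) (fun i => (hVec.2.2.2 i).comp hσ)
      (fun k => hlt_add k (hfin (σ k))) (htend hσL) hL
    exact (relF1_le_liminf hw hVecw hCharw).trans (le_trans liminf_le_limsup hsup)

open ODRelax in
/-- (Proposition 3.1 iii)): the case `p = 1`, `1 ≤ q < N/(N-1)`: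
(a) attainment of the infimum defining `𝓕₁` when finite, and (b) lower semicontinuity
of `𝓕₁` along admissible sequences. -/
theorem stmt2 {N d : ℕ} (q : ℝ) (hexp : Exp1OK N q)
    (Ω : Set (Dom N)) (hΩo : IsOpen Ω) (hΩb : Bornology.IsBounded Ω)
    (W1 W2 : Mat d N → ℝ) (hW1c : Continuous W1) (hW2c : Continuous W2)
    (β : ℝ) (hβ : 0 < β) (hG1 : Growth β q W1) (hG2 : Growth β q W2)
    (α : ℝ) (hα : 0 < α)
    (hC1 : ∀ ξ, α * mnorm ξ ≤ W1 ξ) (hC2 : ∀ ξ, α * mnorm ξ ≤ W2 ξ)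
    (χ : Dom N → ℝ) (u : Dom N → Fin d → ℝ)
    (hχ : IsBVChar Ω χ) (hu : MemBV Ω u) :
    (relF1 q W1 W2 Ω χ u < ⊤ →
      ∃ (un : ℕ → Dom N → Fin d → ℝ) (χn : ℕ → Dom N → ℝ),
        (∀ n, MemW1p q Ω (un n)) ∧ BVWeakStarVec Filter.atTop Ω un u ∧
        BVWeakStarChar Filter.atTop Ω χn χ ∧
        Filter.Tendsto (fun n => energyF W1 W2 Ω (χn n) (un n)) Filter.atTop
          (nhds (relF1 q W1 W2 Ω χ u))) ∧
    (∀ (un : ℕ → Dom N → Fin d → ℝ) (χn : ℕ → Dom N → ℝ),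
      (∀ n, MemW1p q Ω (un n)) → (∀ n, IsBVChar Ω (χn n)) →
      BVWeakStarVec Filter.atTop Ω un u → BVWeakStarChar Filter.atTop Ω χn χ →
      (∀ n, relF1 q W1 W2 Ω (χn n) (un n) < ⊤) →
      relF1 q W1 W2 Ω χ u ≤
        Filter.liminf (fun n => relF1 q W1 W2 Ω (χn n) (un n)) Filter.atTop) :=
  stmt2_general q hexp Ω hΩb W1 W2 α hα hC1 hC2 χ u hχ hu
end
end

section
/- Let f : {0,1} × ℝ^{3×3} → ℝ be continuous and satisfy c|ξ|^p − c₀ ≤ f(b,ξ) ≤ C(1+|ξ|^q) for all b ∈ {0,1}, ξ ∈ ℝ^{3×3}, with 1 < p ≤ q < +∞ and c, c₀, C > 0. Then for every b ∈ {0,1} and ξ₃ ∈ ℝ³, inf_{(ξ₁,ξ₂) ∈ ℝ^{2×3}} f**(b, ξ₁, ξ₂, ξ₃) = (f₀)**(b, ξ₃), i.e. (f**)₀ = (f₀)**, where f₀(b,ξ₃) := inf_{(ξ₁,ξ₂) ∈ ℝ^{2×3}} f(b, ξ₁, ξ₂, ξ₃). -/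
open MeasureTheory Filter Topology Set
open scoped ENNReal Classical

noncomputable section

/-! Write `f₀ = inf_{L v = ·} f` for the surjective linear map `L` (the third column).
A convex minorant `h` of `f₀` lifts to the convex minorant `h ∘ L` of `f`, hence `h ≤ (f**)₀`.
Conversely `(f**)₀` is itself a convex minorant of `f₀`: minimizing a convex function over the
fibres of a linear map gives a convex function (choose `ε`-minimizers in two fibres; their convex
combination lies in the fibre of the combination). -/

namespace ODRelax

section ConvexEnvelope

variable {V : Type*} [AddCommMonoid V] [Module ℝ V] {g h : V → ℝ}

theorem le_convEnv (hh : ConvexOn ℝ univ h) (hhg : ∀ v, h v ≤ g v) (v : V) :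
    h v ≤ convEnv g v :=
  le_csSup ⟨g v, by rintro t ⟨h', -, hh'g, rfl⟩; exact hh'g v⟩ ⟨h, hh, hhg, rfl⟩

theorem convEnv_le (hg : BddBelow (range g)) {v : V} {t : ℝ}
    (ht : ∀ h' : V → ℝ, ConvexOn ℝ univ h' → (∀ w, h' w ≤ g w) → h' v ≤ t) :
    convEnv g v ≤ t := by
  obtain ⟨m, hm⟩ := hg
  refine csSup_le ⟨m, fun _ => m, convexOn_const m convex_univ,
    fun w => hm (mem_range_self w), rfl⟩ ?_
  rintro _ ⟨h', hh', hh'g, rfl⟩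
  exact ht h' hh' hh'g

theorem convEnv_le_self (hg : BddBelow (range g)) (v : V) : convEnv g v ≤ g v :=
  convEnv_le hg fun _ _ hh'g => hh'g v

theorem convEnv_eq_of_forall_le (hh : ConvexOn ℝ univ h) (hhg : ∀ v, h v ≤ g v)
    (hmax : ∀ h' : V → ℝ, ConvexOn ℝ univ h' → (∀ v, h' v ≤ g v) → ∀ v, h' v ≤ h v) :
    convEnv g = h := by
  funext v
  refine le_antisymm ?_ (le_convEnv hh hhg v)
  refine csSup_le ⟨h v, h, hh, hhg, rfl⟩ ?_
  rintro t ⟨h', hh', hh'g, rfl⟩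
  exact hmax h' hh' hh'g v

theorem bddBelow_range_convEnv (hg : BddBelow (range g)) : BddBelow (range (convEnv g)) := by
  obtain ⟨m, hm⟩ := hg
  refine ⟨m, ?_⟩
  rintro _ ⟨v, rfl⟩
  exact le_convEnv (h := fun _ => m) (convexOn_const m convex_univ)
    (fun w => hm (mem_range_self w)) v

theorem convexOn_convEnv (hg : BddBelow (range g)) : ConvexOn ℝ univ (convEnv g) := by
  refine ⟨convex_univ, fun x _ y _ a b ha hb hab => convEnv_le hg fun h' hh' hh'g => ?_⟩
  calc h' (a • x + b • y) ≤ a • h' x + b • h' y := hh'.2 trivial trivial ha hb hab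
    _ ≤ a • convEnv g x + b • convEnv g y := by
      gcongr <;> exact le_convEnv hh' hh'g _

end ConvexEnvelope

section FiberInf

variable {V U : Type*} [AddCommMonoid V] [Module ℝ V] [AddCommMonoid U] [Module ℝ U]
  {L : V →ₗ[ℝ] U} {g : V → ℝ}

def fiberInf (L : V →ₗ[ℝ] U) (g : V → ℝ) (u : U) : ℝ := sInf (g '' (L ⁻¹' {u}))

theorem fiberInf_le (hg : BddBelow (range g)) (v : V) : fiberInf L g (L v) ≤ g v :=
  csInf_le (hg.mono (image_subset_range _ _)) ⟨v, rfl, rfl⟩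

theorem le_fiberInf (hL : Function.Surjective L) {u : U} {m : ℝ}
    (hm : ∀ v, L v = u → m ≤ g v) : m ≤ fiberInf L g u := by
  obtain ⟨v, hv⟩ := hL u
  refine le_csInf ⟨g v, v, hv, rfl⟩ ?_
  rintro t ⟨w, hw, rfl⟩
  exact hm w hw

theorem exists_lt_fiberInf_add (hL : Function.Surjective L) (u : U) {ε : ℝ} (hε : 0 < ε) :
    ∃ v, L v = u ∧ g v < fiberInf L g u + ε := by
  obtain ⟨v, hv⟩ := hL u
  obtain ⟨_, ⟨w, hw, rfl⟩, hlt⟩ :=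
    Real.lt_sInf_add_pos (s := g '' (L ⁻¹' {u})) ⟨g v, v, hv, rfl⟩ hε
  exact ⟨w, hw, hlt⟩

theorem convexOn_fiberInf (hL : Function.Surjective L) (hg : ConvexOn ℝ univ g)
    (hgb : BddBelow (range g)) :
    ConvexOn ℝ univ (fiberInf L g) := by
  refine ⟨convex_univ, fun x _ y _ a b ha hb hab => le_of_forall_pos_le_add fun ε hε => ?_⟩
  obtain ⟨v, rfl, hv⟩ := exists_lt_fiberInf_add (g := g) hL x hε
  obtain ⟨w, rfl, hw⟩ := exists_lt_fiberInf_add (g := g) hL y hε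
  calc fiberInf L g (a • L v + b • L w) ≤ g (a • v + b • w) := by
        rw [← map_smul, ← map_smul, ← map_add]; exact fiberInf_le hgb _
    _ ≤ a • g v + b • g w := hg.2 trivial trivial ha hb hab
    _ ≤ a • (fiberInf L g (L v) + ε) + b • (fiberInf L g (L w) + ε) := by gcongr
    _ = a • fiberInf L g (L v) + b • fiberInf L g (L w) + ε := by
        simp only [smul_eq_mul]; linear_combination ε * hab

theorem fiberInf_convEnv (hL : Function.Surjective L) (hg : BddBelow (range g)) :
    fiberInf L (convEnv g) = convEnv (fiberInf L g) := by
  have hg' := bddBelow_range_convEnv hg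
  symm
  refine convEnv_eq_of_forall_le (convexOn_fiberInf hL (convexOn_convEnv hg) hg') ?_ ?_
  · intro u
    refine le_fiberInf hL fun v hv => ?_
    subst hv
    exact (fiberInf_le hg' v).trans (convEnv_le_self hg v)
  · intro h hh hhg u
    refine le_fiberInf hL fun v hv => ?_
    subst hv
    exact le_convEnv (h := h ∘ L) (hh.comp_linearMap L)
      (fun w => (hhg (L w)).trans (fiberInf_le hg w)) v

end FiberInf

def thirdCol : Mat 3 3 →ₗ[ℝ] (Fin 3 → ℝ) where
  toFun ξ i := ξ i 2
  map_add' _ _ := rfl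
  map_smul' _ _ := rfl

theorem thirdCol_colMk (c1 c2 ξ3 : Fin 3 → ℝ) : thirdCol (colMk c1 c2 ξ3) = ξ3 := rfl

theorem thirdCol_surjective : Function.Surjective thirdCol :=
  fun ξ3 => ⟨colMk 0 0 ξ3, thirdCol_colMk 0 0 ξ3⟩

theorem f0W_eq_fiberInf (W : Mat 3 3 → ℝ) : f0W W = fiberInf thirdCol W := by
  funext ξ3
  refine congrArg sInf (Set.ext fun t => ⟨?_, ?_⟩)
  · rintro ⟨c1, c2, rfl⟩
    exact ⟨colMk c1 c2 ξ3, thirdCol_colMk c1 c2 ξ3, rfl⟩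
  · rintro ⟨ξ, rfl, rfl⟩
    refine ⟨fun i => ξ i 0, fun i => ξ i 1, congrArg W ?_⟩
    funext i j
    fin_cases j <;> rfl

theorem GrowthC.bddBelow_range {c c0 C p q : ℝ} {W : Mat 3 3 → ℝ}
    (hW : GrowthC c c0 C p q W) (hc : 0 ≤ c) : BddBelow (range W) := by
  refine ⟨-c0, ?_⟩
  rintro _ ⟨ξ, rfl⟩
  have hnorm : 0 ≤ mnorm ξ ^ p := Real.rpow_nonneg (Real.sqrt_nonneg _) p
  linarith [(hW ξ).1, mul_nonneg hc hnorm]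

end ODRelax

open ODRelax in
theorem stmt19_general (p q : ℝ)
    (W1 W2 : Mat 3 3 → ℝ)
    (c c0 C : ℝ) (hc : 0 < c)
    (hgc1 : GrowthC c c0 C p q W1) (hgc2 : GrowthC c c0 C p q W2) :
    ∀ ξ3 : Fin 3 → ℝ,
      f0W (convEnv W1) ξ3 = convEnv (f0W W1) ξ3 ∧
      f0W (convEnv W2) ξ3 = convEnv (f0W W2) ξ3 := by
  intro ξ3
  simp only [f0W_eq_fiberInf,
    fiberInf_convEnv thirdCol_surjective (hgc1.bddBelow_range hc.le),
    fiberInf_convEnv thirdCol_surjective (hgc2.bddBelow_range hc.le), and_self]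

open ODRelax in
/-- formula (5.6): under coercive growth conditions, taking the
convex envelope commutes with minimizing out the first two columns:
`(f**)₀(b,ξ₃) = (f₀)**(b,ξ₃)` for every `b ∈ {0,1}` and `ξ₃ ∈ ℝ³`. -/
theorem stmt19 (p q : ℝ) (hp : 1 < p) (hpq : p ≤ q)
    (W1 W2 : Mat 3 3 → ℝ) (hW1c : Continuous W1) (hW2c : Continuous W2)
    (c c0 C : ℝ) (hc : 0 < c) (hc0 : 0 < c0) (hC : 0 < C)
    (hgc1 : GrowthC c c0 C p q W1) (hgc2 : GrowthC c c0 C p q W2) :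
    ∀ ξ3 : Fin 3 → ℝ,
      f0W (convEnv W1) ξ3 = convEnv (f0W W1) ξ3 ∧
      f0W (convEnv W2) ξ3 = convEnv (f0W W2) ξ3 :=
  stmt19_general p q W1 W2 c c0 C hc hgc1 hgc2
end
end
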